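/- For every positive integer n, ∫_0^1 log Γ(x) cos(2nπx) dx = 1/(4n). -/

import Mathlib

/-!
By the reflection formula `Γ(x) Γ(1 - x) = π / sin (π x)` and the symmetry of `cos (2nπx)` under
`x ↦ 1 - x`, twice the integral equals `∫₀¹ (log π - log sin (π x)) cos (2nπx) dx`, that is
`-(1/π) ∫₀^π log (sin θ) cos (2nθ) dθ`. This classical Fourier coefficient is `-π / (2n)`:
integrate by parts against `sin (2nθ)`. Since `sin (2nθ) = sin θ · ∑_{k<n} 2 cos ((2k+1)θ)`, the
function `log (sin θ) sin (2nθ)` is `sin θ log (sin θ)` times a trigonometric polynomial, hence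
continuous on `ℝ` and zero at `0` and `π`, while `cot θ sin (2nθ) = ∑_{k<n} (cos 2kθ + cos 2(k+1)θ)`
integrates to `π` over `[0, π]`.
-/

open Real MeasureTheory intervalIntegral Set Finset

lemma continuousAt_log_Gamma {x : ℝ} (hx : 0 < x) : ContinuousAt (fun y => log (Gamma y)) x :=
  ((differentiableAt_Gamma fun m => by
    have : (0 : ℝ) ≤ m := m.cast_nonneg
    linarith).continuousAt).log (Gamma_pos_of_pos hx).ne'

lemma intervalIntegrable_log_Gamma {a b : ℝ} (ha : 0 ≤ a) (hb : 0 ≤ b) :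
    IntervalIntegrable (fun x => log (Gamma x)) volume a b := by
  have hshift : ContinuousOn (fun x => log (Gamma (x + 1))) (uIcc a b) := fun x hx =>
    ((continuousAt_log_Gamma (by linarith [le_min ha hb, hx.1] : 0 < x + 1)).comp
      (f := fun x => x + 1) (continuous_add_const 1).continuousAt).continuousWithinAt
  refine (hshift.intervalIntegrable.sub intervalIntegrable_log').congr_uIoo fun x hx => ?_
  have hx₀ : 0 < x := lt_of_le_of_lt (le_min ha hb) hx.1
  simp only
  rw [Gamma_add_one hx₀.ne', log_mul hx₀.ne' (Gamma_pos_of_pos hx₀).ne']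
  ring

lemma log_Gamma_add_log_Gamma_one_sub {x : ℝ} (hx₀ : 0 < x) (hx₁ : x < 1) :
    log (Gamma x) + log (Gamma (1 - x)) = log π - log (sin (π * x)) := by
  rw [← log_mul (Gamma_pos_of_pos hx₀).ne' (Gamma_pos_of_pos (sub_pos.2 hx₁)).ne',
    Gamma_mul_Gamma_one_sub, log_div pi_ne_zero
      (sin_pos_of_pos_of_lt_pi (by positivity) (by nlinarith [pi_pos])).ne']

lemma integral_cos_two_nat_mul (k : ℕ) :
    ∫ θ in (0 : ℝ)..π, cos (2 * k * θ) = if k = 0 then π else 0 := by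
  split_ifs with hk
  · simp [hk]
  · have hk' : (2 * k : ℝ) ≠ 0 := by positivity
    rw [integral_comp_mul_left (fun θ => cos θ) hk', integral_cos, mul_zero, sin_zero,
      show 2 * (k : ℝ) * π = (2 * k : ℕ) * π by push_cast; ring, sin_nat_mul_pi]
    simp

lemma sin_two_nat_mul_eq_sin_mul_sum (n : ℕ) (θ : ℝ) :
    sin (2 * n * θ) = sin θ * ∑ k ∈ range n, 2 * cos ((2 * k + 1) * θ) := by
  induction n with
  | zero => simp
  | succ n ih =>
    have hstep : sin (2 * (n + 1 : ℕ) * θ) - sin (2 * n * θ) =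
        sin θ * (2 * cos ((2 * n + 1) * θ)) := by
      rw [sin_sub_sin]
      push_cast
      ring_nf
    rw [sum_range_succ, mul_add, ← ih, ← hstep]
    ring

lemma cos_mul_sum_two_mul_cos (n : ℕ) (θ : ℝ) :
    cos θ * ∑ k ∈ range n, 2 * cos ((2 * k + 1) * θ) =
      ∑ k ∈ range n, (cos (2 * k * θ) + cos (2 * (k + 1 : ℕ) * θ)) := by
  rw [mul_sum]
  refine sum_congr rfl fun k _ => ?_
  rw [cos_add_cos]
  push_cast
  ring_nf
  rw [cos_neg]
  ring

lemma integral_cos_mul_sum_two_mul_cos {n : ℕ} (hn : n ≠ 0) :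
    ∫ θ in (0 : ℝ)..π, cos θ * ∑ k ∈ range n, 2 * cos ((2 * k + 1) * θ) = π := by
  simp_rw [cos_mul_sum_two_mul_cos]
  rw [intervalIntegral.integral_finsetSum fun k _ => by
    apply Continuous.intervalIntegrable; fun_prop]
  have hterm : ∀ k : ℕ, ∫ θ in (0 : ℝ)..π, (cos (2 * k * θ) + cos (2 * (k + 1 : ℕ) * θ)) =
      if k = 0 then π else 0 := fun k => by
    rw [intervalIntegral.integral_add (by apply Continuous.intervalIntegrable; fun_prop)
      (by apply Continuous.intervalIntegrable; fun_prop), integral_cos_two_nat_mul,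
      integral_cos_two_nat_mul]
    simp
  rw [sum_congr rfl fun k _ => hterm k]
  simp [hn]

lemma continuous_log_sin_mul_sin_two_nat_mul (n : ℕ) :
    Continuous fun θ => log (sin θ) * sin (2 * n * θ) := by
  have hfactor : (fun θ => log (sin θ) * sin (2 * n * θ)) =
      fun θ => sin θ * log (sin θ) * ∑ k ∈ range n, 2 * cos ((2 * k + 1) * θ) := by
    ext θ
    rw [sin_two_nat_mul_eq_sin_mul_sum]
    ring
  rw [hfactor]
  exact (continuous_mul_log.comp continuous_sin).mul (by fun_prop)

lemma hasDerivAt_log_sin_mul_sin_two_nat_mul (n : ℕ) {θ : ℝ} (hθ : sin θ ≠ 0) :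
    HasDerivAt (fun θ => log (sin θ) * sin (2 * n * θ))
      (cos θ * ∑ k ∈ range n, 2 * cos ((2 * k + 1) * θ) +
        2 * n * (log (sin θ) * cos (2 * n * θ))) θ := by
  refine (((hasDerivAt_sin θ).log hθ).mul
    (((hasDerivAt_id' θ).const_mul (2 * n : ℝ)).sin)).congr_deriv ?_
  rw [sin_two_nat_mul_eq_sin_mul_sum]
  generalize ∑ k ∈ range n, 2 * cos ((2 * k + 1) * θ) = S
  field_simp

lemma intervalIntegrable_log_sin_mul_cos_two_nat_mul (n : ℕ) (a b : ℝ) :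
    IntervalIntegrable (fun θ => log (sin θ) * cos (2 * n * θ)) volume a b :=
  intervalIntegrable_log_sin.mul_continuousOn (by fun_prop)

theorem integral_log_sin_mul_cos_two_nat_mul {n : ℕ} (hn : n ≠ 0) :
    ∫ θ in (0 : ℝ)..π, log (sin θ) * cos (2 * n * θ) = -(π / (2 * n)) := by
  have hG := intervalIntegrable_log_sin_mul_cos_two_nat_mul n 0 π
  have hFTC := integral_eq_sub_of_hasDerivAt_of_le pi_pos.le
    (continuous_log_sin_mul_sin_two_nat_mul n).continuousOn
    (fun θ hθ => hasDerivAt_log_sin_mul_sin_two_nat_mul n (sin_pos_of_pos_of_lt_pi hθ.1 hθ.2).ne')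
    ((Continuous.intervalIntegrable (by fun_prop) _ _).add (hG.const_mul _))
  rw [intervalIntegral.integral_add (Continuous.intervalIntegrable (by fun_prop) _ _)
    (hG.const_mul _), intervalIntegral.integral_const_mul, integral_cos_mul_sum_two_mul_cos hn,
    show 2 * (n : ℝ) * π = (2 * n : ℕ) * π by push_cast; ring, sin_nat_mul_pi] at hFTC
  simp only [sin_pi, log_zero, mul_zero, sin_zero, sub_self] at hFTC
  have hn' : (n : ℝ) ≠ 0 := Nat.cast_ne_zero.2 hn
  field_simp
  linarith

lemma integral_add_comp_add_sub {g : ℝ → ℝ} {a b : ℝ} (hg : IntervalIntegrable g volume a b) :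
    ∫ x in a..b, (g x + g (a + b - x)) = 2 * ∫ x in a..b, g x := by
  have hreflect : IntervalIntegrable (fun x => g (a + b - x)) volume a b := by
    simpa using (hg.comp_sub_left (a + b)).symm
  rw [intervalIntegral.integral_add hg hreflect, integral_comp_sub_left g (a + b)]
  simp only [add_sub_cancel_right, add_sub_cancel_left]
  ring

theorem stmt_15 (n : ℕ) (hn : 0 < n) :
    ∫ x in (0:ℝ)..1, Real.log (Real.Gamma x) * Real.cos (2 * (n : ℝ) * Real.pi * x) =
      1 / (4 * (n : ℝ)) := by
  have hintegrable :
      IntervalIntegrable (fun x => log (Gamma x) * cos (2 * n * π * x)) volume 0 1 :=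
    (intervalIntegrable_log_Gamma le_rfl zero_le_one).mul_continuousOn (by fun_prop)
  have hreflect : EqOn
      (fun x => log (Gamma x) * cos (2 * n * π * x) +
        log (Gamma (1 - x)) * cos (2 * n * π * (1 - x)))
      (fun x => (log π - log (sin (π * x))) * cos (2 * n * (π * x))) (Ioo 0 1) := fun x hx => by
    dsimp only
    rw [show 2 * n * π * (1 - x) = n * (2 * π) - 2 * n * π * x by ring, cos_nat_mul_two_pi_sub,
      ← log_Gamma_add_log_Gamma_one_sub hx.1 hx.2]
    ring_nf
  have htwice := integral_add_comp_add_sub hintegrable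
  rw [zero_add, integral_congr_Ioo_of_le zero_le_one hreflect,
    integral_comp_mul_left (fun θ => (log π - log (sin θ)) * cos (2 * n * θ)) pi_ne_zero,
    mul_zero, mul_one] at htwice
  simp only [sub_mul] at htwice
  rw [intervalIntegral.integral_sub (Continuous.intervalIntegrable (by fun_prop) _ _)
    (intervalIntegrable_log_sin_mul_cos_two_nat_mul n 0 π), intervalIntegral.integral_const_mul,
    integral_cos_two_nat_mul, if_neg hn.ne', integral_log_sin_mul_cos_two_nat_mul hn.ne',
    smul_eq_mul, mul_zero, zero_sub, neg_neg, inv_mul_eq_div, div_div_cancel_left' pi_ne_zero]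
    at htwice
  have hn' : (n : ℝ) ≠ 0 := by positivity
  field_simp at htwice ⊢
  linarith
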